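/- Let S be a finite state space and K a transition kernel with K(x,y) > 0 for all x, y, and let π be a stationary probability distribution for K. Then for every probability distribution μ₀ on S, the distributions μ_t defined by μ_{t+1}(y) = ∑_x μ_t(x)K(x,y) converge to π as t → ∞ (i.e., for each state y, μ_t(y) → π(y)). -/

import Mathlib

/-! Doeblin's argument. If every entry of the stochastic kernel `K` is at least `c > 0`, then
`K = |S| c · U + (1 - |S| c) · K'` with `U` the uniform kernel and `K'` stochastic. The vector
`μ_t - π` has total mass zero, so `U` annihilates it and each step contracts its `ℓ¹` norm by
`1 - |S| c < 1`; hence `μ_t → π` geometrically fast. -/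

open Finset Filter Topology

theorem Finite.exists_pos_forall_le {α : Type*} [Finite α] {f : α → ℝ} (hf : ∀ a, 0 < f a) :
    ∃ c > 0, ∀ a, c ≤ f a := by
  cases isEmpty_or_nonempty α
  · exact ⟨1, one_pos, isEmptyElim⟩
  · obtain ⟨a₀, ha₀⟩ := Finite.exists_min f
    exact ⟨f a₀, hf a₀, ha₀⟩

section StochasticKernel

variable {S : Type*} [Fintype S] {K : S → S → ℝ}

theorem sum_sum_mul_kernel_eq_sum (hK1 : ∀ x, ∑ y, K x y = 1) (v : S → ℝ) :
    ∑ y, ∑ x, v x * K x y = ∑ x, v x := by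
  rw [sum_comm]
  simp [← mul_sum, hK1]

theorem sum_abs_sum_mul_kernel_le {c : ℝ} (hc : ∀ x y, c ≤ K x y)
    (hK1 : ∀ x, ∑ y, K x y = 1) {v : S → ℝ} (hv : ∑ x, v x = 0) :
    ∑ y, |∑ x, v x * K x y| ≤ (1 - Fintype.card S * c) * ∑ x, |v x| := by
  -- a mass-zero vector does not see the constant part `c` of the kernel
  have hshift : ∀ y, ∑ x, v x * K x y = ∑ x, v x * (K x y - c) := fun y => by
    simp only [mul_sub, sum_sub_distrib, ← sum_mul, hv, zero_mul, sub_zero]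
  calc ∑ y, |∑ x, v x * K x y| = ∑ y, |∑ x, v x * (K x y - c)| := by simp only [hshift]
    _ ≤ ∑ y, ∑ x, |v x| * (K x y - c) := by
        refine sum_le_sum fun y _ => (abs_sum_le_sum_abs _ _).trans_eq ?_
        simp only [abs_mul, abs_of_nonneg (sub_nonneg.2 (hc _ y))]
    _ = ∑ x, |v x| * ∑ y, (K x y - c) := by rw [sum_comm]; simp only [mul_sum]
    _ = (1 - Fintype.card S * c) * ∑ x, |v x| := by
        simp [sum_sub_distrib, hK1, mul_comm, mul_sum]

theorem tendsto_zero_of_kernel_pos (hK : ∀ x y, 0 < K x y) (hK1 : ∀ x, ∑ y, K x y = 1)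
    {ν : ℕ → S → ℝ} (hν : ∀ t y, ν (t + 1) y = ∑ x, ν t x * K x y) (hν0 : ∑ x, ν 0 x = 0)
    (y : S) : Tendsto (fun t => ν t y) atTop (𝓝 0) := by
  obtain ⟨c, hc0, hc⟩ := Finite.exists_pos_forall_le (f := fun p : S × S => K p.1 p.2)
    fun p => hK p.1 p.2
  set r := 1 - Fintype.card S * c
  have hr0 : 0 ≤ r := by
    have : ∑ _z : S, c ≤ ∑ z, K y z := sum_le_sum fun z _ => hc (y, z)
    simp only [sum_const, card_univ, nsmul_eq_mul, hK1] at this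
    linarith
  have hr1 : r < 1 := by
    have : (0 : ℝ) < Fintype.card S := Nat.cast_pos.2 (Fintype.card_pos_iff.2 ⟨y⟩)
    simp only [r]; nlinarith
  have hmass : ∀ t, ∑ x, ν t x = 0 := fun t => by
    induction t with
    | zero => exact hν0
    | succ t ih => simp only [hν, sum_sum_mul_kernel_eq_sum hK1, ih]
  have hgeom : ∀ t, ∑ x, |ν t x| ≤ r ^ t * ∑ x, |ν 0 x| := fun t =>
    le_geom (u := fun t => ∑ x, |ν t x|) hr0 t fun k _ => by
      simpa only [hν] using sum_abs_sum_mul_kernel_le (fun x z => hc (x, z)) hK1 (hmass k)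
  have hbound : Tendsto (fun t => r ^ t * ∑ x, |ν 0 x|) atTop (𝓝 0) := by
    simpa using (tendsto_pow_atTop_nhds_zero_of_lt_one hr0 hr1).mul_const (∑ x, |ν 0 x|)
  refine squeeze_zero_norm (fun t => ?_) hbound
  calc ‖ν t y‖ = |ν t y| := Real.norm_eq_abs _
    _ ≤ ∑ x, |ν t x| :=
        single_le_sum (f := fun x => |ν t x|) (fun _ _ => abs_nonneg _) (mem_univ y)
    _ ≤ _ := hgeom t

end StochasticKernel

theorem mh_convergence_general {S : Type*} [Fintype S]
    (K : S → S → ℝ) (hK : ∀ x y, 0 < K x y) (hK1 : ∀ x, ∑ y, K x y = 1)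
    (π : S → ℝ) (hπ1 : ∑ x, π x = 1)
    (hstat : ∀ y, ∑ x, π x * K x y = π y)
    (μ : ℕ → S → ℝ) (hμ1 : ∑ x, μ 0 x = 1)
    (hstep : ∀ t y, μ (t + 1) y = ∑ x, μ t x * K x y) :
    ∀ y, Filter.Tendsto (fun t => μ t y) Filter.atTop (nhds (π y)) := by
  have hdiff : ∀ t y, μ (t + 1) y - π y = ∑ x, (μ t x - π x) * K x y := fun t y => by
    simp only [hstep, ← hstat y, sub_mul, sum_sub_distrib]
  have hmass : ∑ x, (μ 0 x - π x) = 0 := by simp [sum_sub_distrib, hμ1, hπ1]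
  intro y
  have := tendsto_zero_of_kernel_pos hK hK1 (ν := fun t x => μ t x - π x) hdiff hmass y
  simpa using this.add_const (π y)

theorem mh_convergence {S : Type*} [Fintype S]
    (K : S → S → ℝ) (hK : ∀ x y, 0 < K x y) (hK1 : ∀ x, ∑ y, K x y = 1)
    (π : S → ℝ) (hπ0 : ∀ x, 0 ≤ π x) (hπ1 : ∑ x, π x = 1)
    (hstat : ∀ y, ∑ x, π x * K x y = π y)
    (μ : ℕ → S → ℝ) (hμ0 : ∀ x, 0 ≤ μ 0 x) (hμ1 : ∑ x, μ 0 x = 1)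
    (hstep : ∀ t y, μ (t + 1) y = ∑ x, μ t x * K x y) :
    ∀ y, Filter.Tendsto (fun t => μ t y) Filter.atTop (nhds (π y)) :=
  mh_convergence_general K hK hK1 π hπ1 hstat μ hμ1 hstep
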